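/- arXiv:2605.25178 — 2 statements merged into one kernel-verified Lean document; each statement's English description precedes it below -/
import Mathlib

section
/- Let $L \ge 2$ be an integer and let $\mu$ be the Haar probability measure on the unitary group $U(L)$. For any two unitary matrices $A, B \in U(L)$, $\int_{U(L)} |\mathrm{tr}(A V B V^{\dagger})|^{2}\, d\mu(V) = \frac{(|\mathrm{tr}\,A|^{2}-1)(|\mathrm{tr}\,B|^{2}-1)}{L^{2}-1} + 1$. -/
open MeasureTheory Matrix
open scoped ComplexConjugate Kronecker

noncomputable instance {m n : Type*} : MeasurableSpace (Matrix m n ℂ) := borel _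
instance {m n : Type*} : BorelSpace (Matrix m n ℂ) := ⟨rfl⟩

namespace SecondMomentTwirl

abbrev UG (L : ℕ) := Matrix.unitaryGroup (Fin L) ℂ

instance (L : ℕ) : BorelSpace (UG L) := Subtype.borelSpace _

instance (L : ℕ) : CompactSpace (UG L) := by
  suffices h : IsCompact ((Matrix.unitaryGroup (Fin L) ℂ : Set (Matrix (Fin L) (Fin L) ℂ))) from
    isCompact_iff_compactSpace.mp h
  have hclosed : IsClosed ((Matrix.unitaryGroup (Fin L) ℂ : Set (Matrix (Fin L) (Fin L) ℂ))) := by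
    have h1 : Continuous fun M : Matrix (Fin L) (Fin L) ℂ => star M * M :=
      (continuous_id.matrix_conjTranspose.matrix_mul continuous_id)
    have h2 : Continuous fun M : Matrix (Fin L) (Fin L) ℂ => M * star M :=
      (continuous_id.matrix_mul continuous_id.matrix_conjTranspose)
    have : (Matrix.unitaryGroup (Fin L) ℂ : Set (Matrix (Fin L) (Fin L) ℂ))
        = (fun M => star M * M) ⁻¹' {1} ∩ (fun M => M * star M) ⁻¹' {1} := by
      ext M; simp [Unitary.mem_iff, Set.mem_preimage]
    rw [this]
    exact ((isClosed_singleton.preimage h1).inter (isClosed_singleton.preimage h2))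
  have hsub : (Matrix.unitaryGroup (Fin L) ℂ : Set (Matrix (Fin L) (Fin L) ℂ)) ⊆
      Set.pi Set.univ (fun _ : Fin L => Set.pi Set.univ fun _ : Fin L =>
        Metric.closedBall (0:ℂ) 1) := by
    intro U hU i _ j _
    simpa using entry_norm_bound_of_unitary hU i j
  have hcpt : IsCompact (Set.pi Set.univ (fun _ : Fin L => Set.pi Set.univ fun _ : Fin L =>
      Metric.closedBall (0:ℂ) 1)) :=
    isCompact_univ_pi fun _ => isCompact_univ_pi fun _ => isCompact_closedBall 0 1
  exact hcpt.of_isClosed_subset hclosed hsub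

variable {L : ℕ}

/-- The sandwich `(V ⊗ V) (B ⊗ Bᴴ) (V ⊗ V)ᴴ`, written in collapsed form. -/
noncomputable def S (B V : Matrix (Fin L) (Fin L) ℂ) :
    Matrix (Fin L × Fin L) (Fin L × Fin L) ℂ :=
  (V * B * Vᴴ) ⊗ₖ (V * Bᴴ * Vᴴ)

lemma continuous_S_entry (B : Matrix (Fin L) (Fin L) ℂ) (p q : Fin L × Fin L) :
    Continuous fun V : UG L => S B (V : Matrix (Fin L) (Fin L) ℂ) p q := by
  have hcoe : Continuous fun V : UG L => (V : Matrix (Fin L) (Fin L) ℂ) :=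
    continuous_subtype_val
  have h1 : Continuous fun V : UG L =>
      ((V : Matrix (Fin L) (Fin L) ℂ) * B * (V : Matrix (Fin L) (Fin L) ℂ)ᴴ) :=
    (hcoe.matrix_mul continuous_const).matrix_mul hcoe.matrix_conjTranspose
  have h2 : Continuous fun V : UG L =>
      ((V : Matrix (Fin L) (Fin L) ℂ) * Bᴴ * (V : Matrix (Fin L) (Fin L) ℂ)ᴴ) :=
    (hcoe.matrix_mul continuous_const).matrix_mul hcoe.matrix_conjTranspose
  have e1 : Continuous fun V : UG L =>
      ((V : Matrix (Fin L) (Fin L) ℂ) * B * (V : Matrix (Fin L) (Fin L) ℂ)ᴴ) p.1 q.1 :=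
    (continuous_apply q.1).comp ((continuous_apply p.1).comp h1)
  have e2 : Continuous fun V : UG L =>
      ((V : Matrix (Fin L) (Fin L) ℂ) * Bᴴ * (V : Matrix (Fin L) (Fin L) ℂ)ᴴ) p.2 q.2 :=
    (continuous_apply q.2).comp ((continuous_apply p.2).comp h2)
  simpa only [S, kroneckerMap_apply, Pi.mul_def] using e1.mul e2

lemma integrable_of_continuous {f : UG L → ℂ} (hf : Continuous f)
    (μ : Measure (UG L)) [IsFiniteMeasure μ] : Integrable f μ :=
  hf.integrable_of_hasCompactSupport (HasCompactSupport.of_compactSpace f)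

lemma integrable_S_entry (B : Matrix (Fin L) (Fin L) ℂ) (p q : Fin L × Fin L)
    (μ : Measure (UG L)) [IsFiniteMeasure μ] :
    Integrable (fun V : UG L => S B (V : Matrix (Fin L) (Fin L) ℂ) p q) μ :=
  integrable_of_continuous (continuous_S_entry B p q) μ

/-- the twirled matrix -/
noncomputable def Y (μ : Measure (UG L)) (B : Matrix (Fin L) (Fin L) ℂ) :
    Matrix (Fin L × Fin L) (Fin L × Fin L) ℂ :=
  Matrix.of fun p q => ∫ V : UG L, S B (V : Matrix (Fin L) (Fin L) ℂ) p q ∂μ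

lemma Y_apply (μ : Measure (UG L)) (B : Matrix (Fin L) (Fin L) ℂ) (p q) :
    Y μ B p q = ∫ V : UG L, S B (V : Matrix (Fin L) (Fin L) ℂ) p q ∂μ := rfl

lemma sandwich_apply (W X : Matrix (Fin L × Fin L) (Fin L × Fin L) ℂ) (p q) :
    (W * X * Wᴴ) p q = ∑ s, ∑ r, W p r * X r s * conj (W q s) := by
  simp only [mul_apply, conjTranspose_apply, Finset.sum_mul, starRingEnd_apply]

lemma S_mul (B : Matrix (Fin L) (Fin L) ℂ) (W V : UG L) :
    S B ((W * V : UG L) : Matrix (Fin L) (Fin L) ℂ)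
      = ((W : Matrix (Fin L) (Fin L) ℂ) ⊗ₖ (W : Matrix (Fin L) (Fin L) ℂ))
        * S B (V : Matrix (Fin L) (Fin L) ℂ)
        * ((W : Matrix (Fin L) (Fin L) ℂ) ⊗ₖ (W : Matrix (Fin L) (Fin L) ℂ))ᴴ := by
  have hconj : ∀ M N : Matrix (Fin L) (Fin L) ℂ, (M ⊗ₖ N)ᴴ = Mᴴ ⊗ₖ Nᴴ := by
    intro M N
    ext ⟨a,b⟩ ⟨c,d⟩
    simp [conjTranspose_apply, kroneckerMap_apply, _root_.map_mul]
  rw [hconj]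
  simp only [S, Matrix.UnitaryGroup.mul_val, ← mul_kronecker_mul, conjTranspose_mul]
  congr 1 <;> noncomm_ring

/-- invariance of the twirl under conjugation -/
lemma Y_invariant (μ : Measure (UG L)) [μ.IsHaarMeasure] [IsProbabilityMeasure μ]
    (B : Matrix (Fin L) (Fin L) ℂ) (W : UG L) :
    ((W : Matrix (Fin L) (Fin L) ℂ) ⊗ₖ (W : Matrix (Fin L) (Fin L) ℂ)) * Y μ B
      * ((W : Matrix (Fin L) (Fin L) ℂ) ⊗ₖ (W : Matrix (Fin L) (Fin L) ℂ))ᴴ = Y μ B := by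
  set Wk := ((W : Matrix (Fin L) (Fin L) ℂ) ⊗ₖ (W : Matrix (Fin L) (Fin L) ℂ)) with hWk
  ext p q
  rw [sandwich_apply]
  have step1 : ∀ s r : Fin L × Fin L,
      Wk p r * Y μ B r s * conj (Wk q s)
        = ∫ V : UG L, Wk p r * S B (V : Matrix (Fin L) (Fin L) ℂ) r s * conj (Wk q s) ∂μ := by
    intro s r
    rw [Y_apply, ← integral_const_mul, ← integral_mul_const]
  calc ∑ s, ∑ r, Wk p r * Y μ B r s * conj (Wk q s)
      = ∑ s, ∑ r, ∫ V : UG L,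
          Wk p r * S B (V : Matrix (Fin L) (Fin L) ℂ) r s * conj (Wk q s) ∂μ := by
        simp_rw [step1]
    _ = ∫ V : UG L, ∑ s, ∑ r,
          Wk p r * S B (V : Matrix (Fin L) (Fin L) ℂ) r s * conj (Wk q s) ∂μ := by
        have hint : ∀ r s : Fin L × Fin L, Integrable
            (fun V : UG L => Wk p r * S B (V : Matrix (Fin L) (Fin L) ℂ) r s * conj (Wk q s)) μ :=
          fun r s => ((integrable_S_entry B r s μ).const_mul _).mul_const _
        have h1 : ∀ s : Fin L × Fin L, (∑ r, ∫ V : UG L,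
            Wk p r * S B (V : Matrix (Fin L) (Fin L) ℂ) r s * conj (Wk q s) ∂μ)
            = ∫ V : UG L, ∑ r, Wk p r * S B (V : Matrix (Fin L) (Fin L) ℂ) r s * conj (Wk q s) ∂μ :=
          fun s => (integral_finset_sum _ (fun r _ => hint r s)).symm
        simp_rw [h1]
        exact (integral_finset_sum _ (fun s _ => integrable_finset_sum _
          (fun r _ => hint r s))).symm
    _ = ∫ V : UG L, (Wk * S B (V : Matrix (Fin L) (Fin L) ℂ) * Wkᴴ) p q ∂μ := by
        congr 1; ext V; rw [sandwich_apply]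
    _ = ∫ V : UG L, S B ((W * V : UG L) : Matrix (Fin L) (Fin L) ℂ) p q ∂μ := by
        congr 1; ext V; rw [S_mul]
    _ = Y μ B p q := by
        rw [Y_apply]
        exact integral_mul_left_eq_self (fun V : UG L =>
          S B (V : Matrix (Fin L) (Fin L) ℂ) p q) W
section Vanishing

variable (μ : Measure (UG L)) [μ.IsHaarMeasure] [IsProbabilityMeasure μ]
  (B : Matrix (Fin L) (Fin L) ℂ)

/-- the diagonal unitary with `I` in position `i` -/
noncomputable def Dz (i : Fin L) : Matrix (Fin L) (Fin L) ℂ :=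
  diagonal (fun j => if j = i then Complex.I else 1)

lemma Dz_mem (i : Fin L) : Dz i ∈ Matrix.unitaryGroup (Fin L) ℂ := by
  rw [Matrix.mem_unitaryGroup_iff]
  show Dz i * (Dz i)ᴴ = 1
  rw [Dz, diagonal_conjTranspose, diagonal_mul_diagonal]
  have hz : (fun j => (if j = i then Complex.I else 1) *
      (star fun j => if j = i then Complex.I else 1) j) = fun _ => (1:ℂ) := by
    funext j
    by_cases h : j = i <;> simp [h, Complex.mul_conj]
  calc diagonal (fun j => (if j = i then Complex.I else 1) *
        (star fun j => if j = i then Complex.I else 1) j)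
      = diagonal (fun _ => (1:ℂ)) := by rw [hz]
    _ = 1 := diagonal_one

lemma Y_zero_of_phase {a b c d : Fin L} (i : Fin L)
    (h : ((if a = i then 1 else 0) + (if b = i then 1 else 0) : ℕ)
        ≠ (if c = i then 1 else 0) + (if d = i then 1 else 0)) :
    Y μ B (a, b) (c, d) = 0 := by
  set W : UG L := ⟨Dz i, Dz_mem i⟩ with hW
  have hK : ((W : Matrix (Fin L) (Fin L) ℂ) ⊗ₖ (W : Matrix (Fin L) (Fin L) ℂ))
      = diagonal (fun p : Fin L × Fin L =>
          (if p.1 = i then Complex.I else 1) * (if p.2 = i then Complex.I else 1)) := by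
    show (Dz i) ⊗ₖ (Dz i) = _
    rw [Dz, diagonal_kronecker_diagonal]
  have hinv := Y_invariant μ B W
  rw [hK] at hinv
  set w : Fin L × Fin L → ℂ := fun p =>
    (if p.1 = i then Complex.I else 1) * (if p.2 = i then Complex.I else 1) with hw
  have hentry : w (a,b) * Y μ B (a,b) (c,d) * conj (w (c,d)) = Y μ B (a,b) (c,d) := by
    conv_rhs => rw [← hinv]
    rw [diagonal_conjTranspose]
    show _ = (diagonal w * Y μ B * diagonal (star w)) (a,b) (c,d)
    rw [mul_diagonal, diagonal_mul, Pi.star_apply, starRingEnd_apply]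
  have hphase : w (a,b) * conj (w (c,d)) ≠ 1 := by
    simp only [hw]
    split_ifs at h ⊢ <;> simp_all [Complex.ext_iff] <;> norm_num
  have h2 : (w (a,b) * conj (w (c,d)) - 1) * Y μ B (a,b) (c,d) = 0 := by
    rw [sub_mul, one_mul, sub_eq_zero]
    calc w (a,b) * conj (w (c,d)) * Y μ B (a,b) (c,d)
        = w (a,b) * Y μ B (a,b) (c,d) * conj (w (c,d)) := by ring
      _ = Y μ B (a,b) (c,d) := hentry
  rcases mul_eq_zero.mp h2 with h3 | h3
  · exact absurd (sub_eq_zero.mp h3) hphase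
  · exact h3

end Vanishing

/-- permutation matrix over an arbitrary index type -/
def E {P : Type*} [DecidableEq P] (τ : Equiv.Perm P) : Matrix P P ℂ :=
  Matrix.of fun p q => if p = τ q then 1 else 0

lemma E_mul_apply {P : Type*} [DecidableEq P] [Fintype P] (τ : Equiv.Perm P)
    (X : Matrix P P ℂ) (p q : P) : (E τ * X) p q = X (τ.symm p) q := by
  rw [mul_apply]
  rw [Finset.sum_eq_single (τ.symm p)]
  · simp [E]
  · intro r _ hr
    have : ¬ p = τ r := by
      intro hpr; exact hr (by simp [hpr])
    simp [E, this]
  · simp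

lemma mul_E_conj_apply {P : Type*} [DecidableEq P] [Fintype P] (τ : Equiv.Perm P)
    (X : Matrix P P ℂ) (p q : P) : (X * (E τ)ᴴ) p q = X p (τ.symm q) := by
  rw [mul_apply]
  rw [Finset.sum_eq_single (τ.symm q)]
  · simp [E, conjTranspose_apply]
  · intro s _ hs
    have : ¬ q = τ s := by
      intro hqs; exact hs (by simp [hqs])
    simp [E, conjTranspose_apply, this]
  · simp

lemma E_mul_conj_self {P : Type*} [DecidableEq P] [Fintype P] (τ : Equiv.Perm P) :
    E τ * (E τ)ᴴ = 1 := by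
  ext p q
  rw [mul_E_conj_apply]
  simp [E, one_apply]

lemma E_mem (σ : Equiv.Perm (Fin L)) : E σ ∈ Matrix.unitaryGroup (Fin L) ℂ := by
  rw [Matrix.mem_unitaryGroup_iff]
  exact E_mul_conj_self σ

lemma E_kron (σ : Equiv.Perm (Fin L)) :
    (E σ) ⊗ₖ (E σ) = E (Equiv.prodCongr σ σ) := by
  ext ⟨a, b⟩ ⟨c, d⟩
  simp only [kroneckerMap_apply, E, Matrix.of_apply, Equiv.prodCongr_apply, Prod.map,
    Prod.mk.injEq]
  split_ifs with h1 h2 h3 h3 h2 h3 h3 <;> simp_all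

lemma Y_perm (μ : Measure (UG L)) [μ.IsHaarMeasure] [IsProbabilityMeasure μ]
    (B : Matrix (Fin L) (Fin L) ℂ) (σ : Equiv.Perm (Fin L)) (p q : Fin L × Fin L) :
    Y μ B (σ p.1, σ p.2) (σ q.1, σ q.2) = Y μ B p q := by
  have hinv := Y_invariant μ B ⟨E σ, E_mem σ⟩
  have hE : ((⟨E σ, E_mem σ⟩ : UG L) : Matrix (Fin L) (Fin L) ℂ) = E σ := rfl
  rw [hE, E_kron] at hinv
  set τ := Equiv.prodCongr σ σ with hτ
  have h1 : ∀ u v : Fin L × Fin L, Y μ B (τ.symm u) (τ.symm v) = Y μ B u v := by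
    intro u v
    conv_rhs => rw [← hinv]
    rw [Matrix.mul_assoc, E_mul_apply, mul_E_conj_apply]
  have := h1 (τ (p.1, p.2)) (τ (q.1, q.2))
  simp only [Equiv.symm_apply_apply] at this
  exact this.symm
/-- a permutation sending two given distinct points to two given distinct points -/
lemma exists_perm_two {u v a b : Fin L} (huv : u ≠ v) (hab : a ≠ b) :
    ∃ σ : Equiv.Perm (Fin L), σ u = a ∧ σ v = b := by
  refine ⟨(Equiv.swap v ((Equiv.swap u a) b)).trans (Equiv.swap u a), ?_, ?_⟩
  · have hc : Equiv.swap u a b ≠ u := by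
      rw [Equiv.swap_apply_def]
      split_ifs with h1 h2
      · exact fun h => hab (h.trans h1.symm)
      · exact absurd h2.symm hab
      · exact h1
    simp only [Equiv.trans_apply]
    rw [Equiv.swap_apply_of_ne_of_ne huv (Ne.symm hc), Equiv.swap_apply_left]
  · simp only [Equiv.trans_apply]
    rw [Equiv.swap_apply_left, Equiv.swap_apply_self]

noncomputable def rr : ℂ := ((Real.sqrt 2 : ℝ) : ℂ)⁻¹

lemma conj_rr : conj rr = rr := by
  simp [rr, ← Complex.ofReal_inv, Complex.conj_ofReal]

lemma rr_mul_rr : rr * rr = 2⁻¹ := by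
  have h : (Real.sqrt 2) * (Real.sqrt 2) = 2 := Real.mul_self_sqrt (by norm_num)
  rw [rr, ← mul_inv, ← Complex.ofReal_mul, h]
  norm_num

lemma rr_ne : rr ≠ 0 := by
  rw [rr]
  simp [Complex.ofReal_ne_zero, Real.sqrt_ne_zero']

/-- rotation by 45 degrees in the (u,v) plane -/
noncomputable def Rot (u v : Fin L) : Matrix (Fin L) (Fin L) ℂ :=
  Matrix.of fun i j =>
    if i = u then (if j = u then rr else if j = v then rr else 0)
    else if i = v then (if j = u then -rr else if j = v then rr else 0)
    else if i = j then 1 else 0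

lemma sum_eq_pair {u v : Fin L} (huv : u ≠ v) (f : Fin L → ℂ)
    (hf : ∀ k, k ≠ u → k ≠ v → f k = 0) : ∑ k, f k = f u + f v := by
  rw [← Finset.sum_pair huv]
  refine (Finset.sum_subset (Finset.subset_univ _) fun k _ hk => ?_).symm
  simp only [Finset.mem_insert, Finset.mem_singleton, not_or] at hk
  exact hf k hk.1 hk.2

lemma Rot_mem {u v : Fin L} (huv : u ≠ v) : Rot u v ∈ Matrix.unitaryGroup (Fin L) ℂ := by
  rw [Matrix.mem_unitaryGroup_iff]
  show Rot u v * (Rot u v)ᴴ = 1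
  have h2r : rr * rr + rr * rr = 1 := by rw [rr_mul_rr]; norm_num
  ext i j
  rw [mul_apply]
  simp only [conjTranspose_apply, starRingEnd_apply]
  by_cases hiu : i = u
  · rw [hiu]
    rw [sum_eq_pair huv _ (fun k hk1 hk2 => by simp [Rot, hk1, hk2])]
    by_cases hju : j = u
    · rw [hju]
      simp [Rot, one_apply, huv, ← starRingEnd_apply, conj_rr, h2r]
    · by_cases hjv : j = v
      · rw [hjv]
        simp only [Rot, Matrix.of_apply, if_pos rfl, if_neg huv, if_neg (Ne.symm huv),
          one_apply, ← starRingEnd_apply, conj_rr]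
        simp [Ne.symm huv]
      · simp [Rot, one_apply, huv, hju, hjv, Ne.symm hju]
  · by_cases hiv : i = v
    · rw [hiv]
      rw [sum_eq_pair huv _ (fun k hk1 hk2 => by simp [Rot, Ne.symm huv, hk1, hk2])]
      by_cases hju : j = u
      · rw [hju]
        simp only [Rot, Matrix.of_apply, if_pos rfl, if_neg huv, if_neg (Ne.symm huv),
          one_apply, ← starRingEnd_apply, conj_rr]
        simp [huv, Ne.symm huv]
      · by_cases hjv : j = v
        · rw [hjv]
          simp [Rot, one_apply, huv, Ne.symm huv, ← starRingEnd_apply, conj_rr, h2r]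
        · simp [Rot, one_apply, huv, Ne.symm huv, hju, hjv, Ne.symm hjv]
    · rw [show (∑ x, Rot u v i x * star (Rot u v j x)) = Rot u v i i * star (Rot u v j i) from
        Finset.sum_eq_single i (fun k _ hk => by simp [Rot, hiu, hiv, Ne.symm hk]) (by simp)]
      by_cases hju : j = u
      · rw [hju]
        simp [Rot, one_apply, hiu, hiv, Ne.symm hiu, fun h : u = i => hiu h.symm]
      · by_cases hjv : j = v
        · rw [hjv]
          simp [Rot, one_apply, hiu, hiv, Ne.symm hiv, fun h : v = i => hiv h.symm]
        · simp [Rot, one_apply, hiu, hiv, hju, hjv, Ne.symm hiu, Ne.symm hiv,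
            Ne.symm hju, Ne.symm hjv, eq_comm]

lemma sum_pair_pair {u v : Fin L} (huv : u ≠ v) (f : Fin L × Fin L → ℂ)
    (hf : ∀ p : Fin L × Fin L, ¬((p.1 = u ∨ p.1 = v) ∧ (p.2 = u ∨ p.2 = v)) → f p = 0) :
    ∑ p, f p = f (u,u) + f (u,v) + f (v,u) + f (v,v) := by
  have hT : ∑ p, f p = ∑ p ∈ ({(u,u),(u,v),(v,u),(v,v)} : Finset (Fin L × Fin L)), f p := by
    refine (Finset.sum_subset (Finset.subset_univ _) fun p _ hp => hf p ?_).symm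
    intro hcond
    apply hp
    simp only [Finset.mem_insert, Finset.mem_singleton, Prod.ext_iff]
    rcases hcond.1 with h1 | h1 <;> rcases hcond.2 with h2 | h2 <;> tauto
  rw [hT]
  rw [Finset.sum_insert (by simp [Prod.ext_iff, huv, Ne.symm huv]),
      Finset.sum_insert (by simp [Prod.ext_iff, huv, Ne.symm huv]),
      Finset.sum_insert (by simp [Prod.ext_iff, huv, Ne.symm huv]),
      Finset.sum_singleton]
  ring

lemma sum_sandwich {u v : Fin L} (huv : u ≠ v) (F : Fin L × Fin L → Fin L × Fin L → ℂ)
    (h1 : ∀ r s, ¬((r.1 = u ∨ r.1 = v) ∧ (r.2 = u ∨ r.2 = v)) → F r s = 0)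
    (h2 : ∀ r s, ¬((s.1 = u ∨ s.1 = v) ∧ (s.2 = u ∨ s.2 = v)) → F r s = 0) :
    ∑ s, ∑ r, F r s
      = F (u,u) (u,u) + F (u,v) (u,u) + F (v,u) (u,u) + F (v,v) (u,u)
      + (F (u,u) (u,v) + F (u,v) (u,v) + F (v,u) (u,v) + F (v,v) (u,v))
      + (F (u,u) (v,u) + F (u,v) (v,u) + F (v,u) (v,u) + F (v,v) (v,u))
      + (F (u,u) (v,v) + F (u,v) (v,v) + F (v,u) (v,v) + F (v,v) (v,v)) := by
  rw [sum_pair_pair huv (fun s => ∑ r, F r s)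
    (fun p hp => Finset.sum_eq_zero fun r _ => h2 r p hp)]
  rw [sum_pair_pair huv (fun r => F r (u,u)) (fun p hp => h1 p _ hp),
      sum_pair_pair huv (fun r => F r (u,v)) (fun p hp => h1 p _ hp),
      sum_pair_pair huv (fun r => F r (v,u)) (fun p hp => h1 p _ hp),
      sum_pair_pair huv (fun r => F r (v,v)) (fun p hp => h1 p _ hp)]

lemma Y_dd (μ : Measure (UG L)) [μ.IsHaarMeasure] [IsProbabilityMeasure μ]
    (B : Matrix (Fin L) (Fin L) ℂ) {u v : Fin L} (huv : u ≠ v) :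
    Y μ B (u,u) (u,u) = Y μ B (u,v) (u,v) + Y μ B (u,v) (v,u) := by
  set x := Y μ B (u,v) (u,v) with hx
  set y := Y μ B (u,v) (v,u) with hy
  set dd := Y μ B (u,u) (u,u) with hdd
  -- values by the swap symmetry
  have hswap := fun p q => Y_perm μ B (Equiv.swap u v) p q
  have hvv : Y μ B (v,v) (v,v) = dd := by
    simpa [Equiv.swap_apply_left] using hswap (u,u) (u,u)
  have hvuvu : Y μ B (v,u) (v,u) = x := by
    simpa [Equiv.swap_apply_left, Equiv.swap_apply_right] using hswap (u,v) (u,v)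
  have hvuuv : Y μ B (v,u) (u,v) = y := by
    simpa [Equiv.swap_apply_left, Equiv.swap_apply_right] using hswap (u,v) (v,u)
  -- vanishing entries
  have z1 : Y μ B (u,u) (u,v) = 0 := Y_zero_of_phase μ B u (by simp [Ne.symm huv])
  have z2 : Y μ B (u,u) (v,u) = 0 := Y_zero_of_phase μ B u (by simp [Ne.symm huv])
  have z3 : Y μ B (u,u) (v,v) = 0 := Y_zero_of_phase μ B u (by simp [Ne.symm huv])
  have z4 : Y μ B (u,v) (u,u) = 0 := Y_zero_of_phase μ B u (by simp [Ne.symm huv])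
  have z5 : Y μ B (u,v) (v,v) = 0 := Y_zero_of_phase μ B u (by simp [Ne.symm huv])
  have z6 : Y μ B (v,u) (u,u) = 0 := Y_zero_of_phase μ B u (by simp [Ne.symm huv])
  have z7 : Y μ B (v,u) (v,v) = 0 := Y_zero_of_phase μ B u (by simp [Ne.symm huv])
  have z8 : Y μ B (v,v) (u,u) = 0 := Y_zero_of_phase μ B u (by simp [Ne.symm huv])
  have z9 : Y μ B (v,v) (u,v) = 0 := Y_zero_of_phase μ B u (by simp [Ne.symm huv])
  have z10 : Y μ B (v,v) (v,u) = 0 := Y_zero_of_phase μ B u (by simp [Ne.symm huv])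
  -- Rot entries
  have Ruu : Rot u v u u = rr := by simp [Rot]
  have Ruv : Rot u v u v = rr := by simp [Rot, huv, Ne.symm huv]
  have Rvu : Rot u v v u = -rr := by simp [Rot, huv, Ne.symm huv]
  have Rvv : Rot u v v v = rr := by simp [Rot, huv, Ne.symm huv]
  have hRu0 : ∀ k, ¬(k = u ∨ k = v) → Rot u v u k = 0 := by
    intro k hk
    push_neg at hk
    simp [Rot, hk.1, hk.2]
  have hRv0 : ∀ k, ¬(k = u ∨ k = v) → Rot u v v k = 0 := by
    intro k hk
    push_neg at hk
    simp [Rot, huv, Ne.symm huv, hk.1, hk.2]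
  -- the invariance equation at entry ((u,u),(v,v))
  have hR := Y_invariant μ B ⟨Rot u v, Rot_mem huv⟩
  have hRc : ((⟨Rot u v, Rot_mem huv⟩ : UG L) : Matrix (Fin L) (Fin L) ℂ) = Rot u v := rfl
  rw [hRc] at hR
  have key : ((Rot u v ⊗ₖ Rot u v) * Y μ B * (Rot u v ⊗ₖ Rot u v)ᴴ) (u,u) (v,v) = 0 := by
    rw [hR]
    exact z3
  rw [sandwich_apply] at key
  simp only [kroneckerMap_apply] at key
  rw [sum_sandwich huv
      (fun r s => Rot u v u r.1 * Rot u v u r.2 * Y μ B r s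
        * conj (Rot u v v s.1 * Rot u v v s.2))
      (fun r s hr => by
        rcases not_and_or.mp hr with h | h
        · simp [hRu0 r.1 h]
        · simp [hRu0 r.2 h])
      (fun r s hs => by
        rcases not_and_or.mp hs with h | h
        · simp [hRv0 s.1 h]
        · simp [hRv0 s.2 h])] at key
  simp only [Ruu, Ruv, Rvu, Rvv, hvv, hvuvu, hvuuv, z1, z2, z3, z4, z5, z6, z7, z8, z9, z10,
    _root_.map_mul, map_neg, conj_rr, mul_zero, zero_mul, mul_neg, neg_mul, neg_neg, add_zero,
    zero_add] at key
  have hr4 : rr * rr * (rr * rr) * 2 ≠ 0 :=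
    mul_ne_zero (mul_ne_zero (mul_ne_zero rr_ne rr_ne) (mul_ne_zero rr_ne rr_ne)) two_ne_zero
  have hfactor : rr * rr * (rr * rr) * 2 * (dd - (x + y)) = 0 := by
    linear_combination key
  rcases mul_eq_zero.mp hfactor with h | h
  · exact absurd h hr4
  · exact sub_eq_zero.mp h
section Structure

variable (μ : Measure (UG L)) [μ.IsHaarMeasure] [IsProbabilityMeasure μ]
  (B : Matrix (Fin L) (Fin L) ℂ)

lemma Y_struct {u v : Fin L} (huv : u ≠ v) (a b c d : Fin L) :
    Y μ B (a,b) (c,d) = (if a = c ∧ b = d then Y μ B (u,v) (u,v) else 0)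
      + (if a = d ∧ b = c then Y μ B (u,v) (v,u) else 0) := by
  by_cases h1 : a = c ∧ b = d
  · by_cases h2 : a = d ∧ b = c
    · rw [if_pos h1, if_pos h2]
      have hba : b = a := h1.2.trans h2.1.symm
      rw [← h1.1, ← h1.2, hba]
      have e1 : Y μ B (a,a) (a,a) = Y μ B (u,u) (u,u) := by
        have h := Y_perm μ B (Equiv.swap u a) (u,u) (u,u)
        simpa [Equiv.swap_apply_left] using h
      rw [e1, Y_dd μ B huv]
    · rw [if_pos h1, if_neg h2, add_zero, ← h1.1, ← h1.2]
      have hab : a ≠ b := fun h => h2 ⟨h.trans h1.2, h.symm.trans h1.1⟩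
      obtain ⟨σ, hσu, hσv⟩ := exists_perm_two huv hab
      have h := Y_perm μ B σ (u,v) (u,v)
      simpa [hσu, hσv] using h
  · by_cases h2 : a = d ∧ b = c
    · rw [if_neg h1, if_pos h2, zero_add, ← h2.1, ← h2.2]
      have hab : a ≠ b := fun h => h1 ⟨h.trans h2.2, h.symm.trans h2.1⟩
      obtain ⟨σ, hσu, hσv⟩ := exists_perm_two huv hab
      have h := Y_perm μ B σ (u,v) (v,u)
      simpa [hσu, hσv] using h
    · rw [if_neg h1, if_neg h2, add_zero]
      by_cases hac : a = c
      · have hbd : b ≠ d := fun h => h1 ⟨hac, h⟩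
        refine Y_zero_of_phase μ B b ?_
        by_cases hab : a = b <;> simp [← hac, Ne.symm hbd, hab]
      · by_cases hbc : b = c
        · have had : a ≠ d := fun h => h2 ⟨h, hbc⟩
          have hba : b ≠ a := fun h => hac (h.symm.trans hbc)
          refine Y_zero_of_phase μ B a ?_
          simp [← hbc, hba, Ne.symm had]
        · refine Y_zero_of_phase μ B c ?_
          by_cases hdc : d = c <;> simp [hac, hbc, hdc]


end Structure

lemma ptrace1 (B V : UG L) :
    ∑ p : Fin L × Fin L, S (B : Matrix (Fin L) (Fin L) ℂ) (V : Matrix (Fin L) (Fin L) ℂ) p p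
      = (B : Matrix (Fin L) (Fin L) ℂ).trace * conj (B : Matrix (Fin L) (Fin L) ℂ).trace := by
  have hV : (V : Matrix (Fin L) (Fin L) ℂ)ᴴ * (V : Matrix (Fin L) (Fin L) ℂ) = 1 := by
    have h := V.2.1
    rwa [Matrix.star_eq_conjTranspose] at h
  have h : ∑ p : Fin L × Fin L, S (B : Matrix (Fin L) (Fin L) ℂ) (V : Matrix (Fin L) (Fin L) ℂ) p p
      = (S (B : Matrix (Fin L) (Fin L) ℂ) (V : Matrix (Fin L) (Fin L) ℂ)).trace := by
    simp [Matrix.trace, Matrix.diag]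
  rw [h, S, trace_kronecker]
  have t1 : ((V : Matrix (Fin L) (Fin L) ℂ) * (B : Matrix (Fin L) (Fin L) ℂ)
      * (V : Matrix (Fin L) (Fin L) ℂ)ᴴ).trace = (B : Matrix (Fin L) (Fin L) ℂ).trace := by
    rw [trace_mul_cycle, hV, Matrix.one_mul]
  have t2 : ((V : Matrix (Fin L) (Fin L) ℂ) * (B : Matrix (Fin L) (Fin L) ℂ)ᴴ
      * (V : Matrix (Fin L) (Fin L) ℂ)ᴴ).trace = conj ((B : Matrix (Fin L) (Fin L) ℂ).trace) := by
    rw [trace_mul_cycle, hV, Matrix.one_mul, trace_conjTranspose]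
    rfl
  rw [t1, t2]

lemma ptrace2 (B V : UG L) :
    ∑ a : Fin L, ∑ b : Fin L,
        S (B : Matrix (Fin L) (Fin L) ℂ) (V : Matrix (Fin L) (Fin L) ℂ) (a,b) (b,a) = (L : ℂ) := by
  have hV : (V : Matrix (Fin L) (Fin L) ℂ)ᴴ * (V : Matrix (Fin L) (Fin L) ℂ) = 1 := by
    have h := V.2.1
    rwa [Matrix.star_eq_conjTranspose] at h
  have hV' : (V : Matrix (Fin L) (Fin L) ℂ) * (V : Matrix (Fin L) (Fin L) ℂ)ᴴ = 1 := by
    have h := V.2.2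
    rwa [Matrix.star_eq_conjTranspose] at h
  have hB' : (B : Matrix (Fin L) (Fin L) ℂ) * (B : Matrix (Fin L) (Fin L) ℂ)ᴴ = 1 := by
    have h := B.2.2
    rwa [Matrix.star_eq_conjTranspose] at h
  set Vm := (V : Matrix (Fin L) (Fin L) ℂ)
  set Bm := (B : Matrix (Fin L) (Fin L) ℂ)
  have hsum : ∑ a : Fin L, ∑ b : Fin L, S Bm Vm (a,b) (b,a)
      = ((Vm * Bm * Vmᴴ) * (Vm * Bmᴴ * Vmᴴ)).trace := by
    simp [S, kroneckerMap_apply, Matrix.trace, Matrix.diag, mul_apply]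
  rw [hsum]
  have hprod : (Vm * Bm * Vmᴴ) * (Vm * Bmᴴ * Vmᴴ) = 1 := by
    have e1 : (Vm * Bm * Vmᴴ) * (Vm * Bmᴴ * Vmᴴ) = Vm * Bm * (Vmᴴ * Vm) * (Bmᴴ * Vmᴴ) := by
      noncomm_ring
    rw [e1, hV, Matrix.mul_one]
    have e2 : Vm * Bm * (Bmᴴ * Vmᴴ) = Vm * (Bm * Bmᴴ) * Vmᴴ := by noncomm_ring
    rw [e2, hB', Matrix.mul_one, hV']
  rw [hprod, trace_one]
  simp

variable (μ : Measure (UG L)) [μ.IsHaarMeasure] [IsProbabilityMeasure μ] (B : UG L)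

lemma Ysum1 : ∑ p : Fin L × Fin L, Y μ (B : Matrix (Fin L) (Fin L) ℂ) p p
    = (B : Matrix (Fin L) (Fin L) ℂ).trace * conj (B : Matrix (Fin L) (Fin L) ℂ).trace := by
  calc ∑ p : Fin L × Fin L, Y μ (B : Matrix (Fin L) (Fin L) ℂ) p p
      = ∫ V : UG L, ∑ p : Fin L × Fin L,
          S (B : Matrix (Fin L) (Fin L) ℂ) (V : Matrix (Fin L) (Fin L) ℂ) p p ∂μ :=
        (integral_finset_sum _ fun p _ => integrable_S_entry _ p p μ).symm
    _ = ∫ _ : UG L, ((B : Matrix (Fin L) (Fin L) ℂ).trace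
          * conj (B : Matrix (Fin L) (Fin L) ℂ).trace) ∂μ := by
        congr 1
        funext V
        exact ptrace1 B V
    _ = _ := by simp

lemma Ysum2 : ∑ a : Fin L, ∑ b : Fin L, Y μ (B : Matrix (Fin L) (Fin L) ℂ) (a,b) (b,a)
    = (L : ℂ) := by
  calc ∑ a : Fin L, ∑ b : Fin L, Y μ (B : Matrix (Fin L) (Fin L) ℂ) (a,b) (b,a)
      = ∫ V : UG L, ∑ a : Fin L, ∑ b : Fin L,
          S (B : Matrix (Fin L) (Fin L) ℂ) (V : Matrix (Fin L) (Fin L) ℂ) (a,b) (b,a) ∂μ := by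
        rw [integral_finset_sum _ fun a _ => integrable_finset_sum _
          (fun b _ => integrable_S_entry _ (a,b) (b,a) μ)]
        congr 1
        funext a
        exact (integral_finset_sum _ fun b _ => integrable_S_entry _ (a,b) (b,a) μ).symm
    _ = ∫ _ : UG L, (L : ℂ) ∂μ := by
        congr 1
        funext V
        exact ptrace2 B V
    _ = (L : ℂ) := by simp

lemma pnorm (A B V : Matrix (Fin L) (Fin L) ℂ) :
    ((‖(A * V * B * Vᴴ).trace‖^2 : ℝ) : ℂ)
      = ∑ p : Fin L × Fin L, ∑ q : Fin L × Fin L, (A ⊗ₖ Aᴴ) p q * S B V q p := by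
  have h1 : ∑ p : Fin L × Fin L, ∑ q : Fin L × Fin L, (A ⊗ₖ Aᴴ) p q * S B V q p
      = ((A ⊗ₖ Aᴴ) * S B V).trace := by
    simp [Matrix.trace, Matrix.diag, mul_apply]
  rw [h1, S, ← mul_kronecker_mul, trace_kronecker]
  have h3 : Aᴴ * (V * Bᴴ * Vᴴ) = ((V * B * Vᴴ) * A)ᴴ := by
    simp [Matrix.conjTranspose_mul, Matrix.mul_assoc]
  have h2 : (Aᴴ * (V * Bᴴ * Vᴴ)).trace = conj ((A * (V * B * Vᴴ)).trace) := by
    rw [h3, trace_conjTranspose, trace_mul_comm]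
    rfl
  rw [h2]
  have h4 : A * (V * B * Vᴴ) = A * V * B * Vᴴ := by simp [Matrix.mul_assoc]
  rw [h4, Complex.mul_conj]
  norm_cast
  rw [← Complex.sq_norm]

lemma Ysum3 (A : UG L) :
    ∫ V : UG L, ((‖((A : Matrix (Fin L) (Fin L) ℂ) * (V : Matrix (Fin L) (Fin L) ℂ)
        * (B : Matrix (Fin L) (Fin L) ℂ) * (V : Matrix (Fin L) (Fin L) ℂ)ᴴ).trace‖^2 : ℝ) : ℂ) ∂μ
      = ∑ p : Fin L × Fin L, ∑ q : Fin L × Fin L,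
          ((A : Matrix (Fin L) (Fin L) ℂ) ⊗ₖ (A : Matrix (Fin L) (Fin L) ℂ)ᴴ) p q
            * Y μ (B : Matrix (Fin L) (Fin L) ℂ) q p := by
  simp_rw [pnorm]
  refine (integral_finset_sum _ (fun p _ => integrable_finset_sum _
    (fun q _ => (integrable_S_entry _ q p μ).const_mul _))).trans ?_
  refine Finset.sum_congr rfl fun p _ => ?_
  refine (integral_finset_sum _ (fun q _ => (integrable_S_entry _ q p μ).const_mul _)).trans ?_
  refine Finset.sum_congr rfl fun q _ => ?_
  rw [integral_const_mul]
  rfl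

end SecondMomentTwirl

open SecondMomentTwirl in
/-- For unitary `A, B ∈ U(L)` with `L ≥ 2` and Haar-random `V ∈ U(L)`,
`∫ |tr(A V B V†)|² dμ(V) = (|tr A|² - 1)(|tr B|² - 1)/(L² - 1) + 1`. -/
theorem second_moment_twirl_unitary (L : ℕ) (hL : 2 ≤ L)
    (μ : Measure (Matrix.unitaryGroup (Fin L) ℂ))
    [μ.IsHaarMeasure] [IsProbabilityMeasure μ]
    (A B : Matrix.unitaryGroup (Fin L) ℂ) :
    ∫ V : Matrix.unitaryGroup (Fin L) ℂ,
        ‖((A : Matrix (Fin L) (Fin L) ℂ) * (V : Matrix (Fin L) (Fin L) ℂ)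
            * (B : Matrix (Fin L) (Fin L) ℂ) * (V : Matrix (Fin L) (Fin L) ℂ)ᴴ).trace‖ ^ 2 ∂μ
      = (‖(A : Matrix (Fin L) (Fin L) ℂ).trace‖ ^ 2 - 1)
          * (‖(B : Matrix (Fin L) (Fin L) ℂ).trace‖ ^ 2 - 1) / ((L : ℝ) ^ 2 - 1) + 1 := by
  classical
  have hAm : (A : Matrix (Fin L) (Fin L) ℂ) * (A : Matrix (Fin L) (Fin L) ℂ)ᴴ = 1 := by
    have h := A.2.2
    rwa [Matrix.star_eq_conjTranspose] at h
  set Am := (A : Matrix (Fin L) (Fin L) ℂ) with hAmd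
  set Bm := (B : Matrix (Fin L) (Fin L) ℂ) with hBmd
  set u : Fin L := ⟨0, by omega⟩ with hu
  set v : Fin L := ⟨1, by omega⟩ with hv
  have huv : u ≠ v := by simp [hu, hv, Fin.ext_iff]
  set x := Y μ Bm (u,v) (u,v) with hxd
  set y := Y μ Bm (u,v) (v,u) with hyd
  have hstruct : ∀ a b c d : Fin L, Y μ Bm (a,b) (c,d)
      = (if a = c ∧ b = d then x else 0) + (if a = d ∧ b = c then y else 0) :=
    fun a b c d => Y_struct μ Bm huv a b c d
  -- first trace equation
  have hsum1 : ∑ p : Fin L × Fin L, Y μ Bm p p = (L:ℂ)^2 * x + (L:ℂ) * y := by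
    rw [Fintype.sum_prod_type]
    have hterm : ∀ a b : Fin L, Y μ Bm (a,b) (a,b) = x + (if a = b then y else 0) := by
      intro a b
      rw [hstruct a b a b]
      by_cases hab : a = b <;> simp [hab]
    simp_rw [hterm]
    simp [Finset.sum_add_distrib, Finset.sum_ite_eq, Finset.card_univ]
    ring
  have e1 : (L:ℂ)^2 * x + (L:ℂ) * y = Bm.trace * conj Bm.trace := by
    rw [← hsum1]; exact Ysum1 μ B
  -- second trace equation
  have hsum2 : ∑ a : Fin L, ∑ b : Fin L, Y μ Bm (a,b) (b,a)
      = (L:ℂ) * x + (L:ℂ)^2 * y := by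
    have hterm : ∀ a b : Fin L, Y μ Bm (a,b) (b,a) = (if a = b then x else 0) + y := by
      intro a b
      rw [hstruct a b b a]
      by_cases hab : a = b <;> simp [hab]
    simp_rw [hterm]
    simp [Finset.sum_add_distrib, Finset.sum_ite_eq, Finset.card_univ]
    ring
  have e2 : (L:ℂ) * x + (L:ℂ)^2 * y = (L:ℂ) := by
    rw [← hsum2]; exact Ysum2 μ B
  -- the A-weighted sum
  have hsum3 : ∑ p : Fin L × Fin L, ∑ q : Fin L × Fin L, (Am ⊗ₖ Amᴴ) p q * Y μ Bm q p
      = (Am.trace * conj Am.trace) * x + (L:ℂ) * y := by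
    have hterm : ∀ p q : Fin L × Fin L, (Am ⊗ₖ Amᴴ) p q * Y μ Bm q p
        = (if q = p then (Am ⊗ₖ Amᴴ) p q * x else 0)
          + (if q = (p.2, p.1) then (Am ⊗ₖ Amᴴ) p q * y else 0) := by
      intro p q
      have h := hstruct q.1 q.2 p.1 p.2
      rw [show Y μ Bm q p = Y μ Bm (q.1, q.2) (p.1, p.2) by rw [Prod.mk.eta, Prod.mk.eta], h,
        mul_add, mul_ite, mul_zero, mul_ite, mul_zero]
      congr 1
      · congr 1
        simp [Prod.ext_iff]
      · congr 1
        simp [Prod.ext_iff]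
    simp_rw [hterm]
    rw [Finset.sum_congr rfl (fun p _ => Finset.sum_add_distrib), Finset.sum_add_distrib]
    have c1 : ∑ p : Fin L × Fin L, ∑ q : Fin L × Fin L,
        (if q = p then (Am ⊗ₖ Amᴴ) p q * x else 0) = (Am.trace * conj Am.trace) * x := by
      have h1 : ∀ p : Fin L × Fin L, ∑ q : Fin L × Fin L,
          (if q = p then (Am ⊗ₖ Amᴴ) p q * x else 0) = (Am ⊗ₖ Amᴴ) p p * x := by
        intro p
        simp
      simp_rw [h1]
      rw [Fintype.sum_prod_type]
      simp only [kroneckerMap_apply, conjTranspose_apply, ← starRingEnd_apply]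
      have h2 : ∀ a : Fin L, ∑ b : Fin L, Am a a * conj (Am b b) * x
          = Am a a * (∑ b : Fin L, conj (Am b b)) * x := by
        intro a
        rw [Finset.mul_sum, Finset.sum_mul]
      simp_rw [h2]
      rw [← Finset.sum_mul, ← Finset.sum_mul, ← map_sum]
      rfl
    have c2 : ∑ p : Fin L × Fin L, ∑ q : Fin L × Fin L,
        (if q = (p.2, p.1) then (Am ⊗ₖ Amᴴ) p q * y else 0) = (L:ℂ) * y := by
      have h1 : ∀ p : Fin L × Fin L, ∑ q : Fin L × Fin L,
          (if q = (p.2, p.1) then (Am ⊗ₖ Amᴴ) p q * y else 0)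
          = (Am ⊗ₖ Amᴴ) p (p.2, p.1) * y := by
        intro p
        simp
      simp_rw [h1]
      rw [Fintype.sum_prod_type]
      simp only [kroneckerMap_apply]
      have h2 : ∀ a : Fin L, ∑ b : Fin L, Am a b * Amᴴ b a * y = (Am * Amᴴ) a a * y := by
        intro a
        rw [mul_apply, Finset.sum_mul]
      simp_rw [h2, hAm]
      simp [one_apply, Finset.card_univ]
    rw [c1, c2]
  -- put everything together over ℂ
  have hJ : ((∫ V : Matrix.unitaryGroup (Fin L) ℂ,
        ‖(Am * (V : Matrix (Fin L) (Fin L) ℂ) * Bm * (V : Matrix (Fin L) (Fin L) ℂ)ᴴ).trace‖ ^ 2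
          ∂μ : ℝ) : ℂ)
      = (Am.trace * conj Am.trace) * x + (L:ℂ) * y := by
    have hJ0 : ∫ V : Matrix.unitaryGroup (Fin L) ℂ,
        ((‖(Am * (V : Matrix (Fin L) (Fin L) ℂ) * Bm
          * (V : Matrix (Fin L) (Fin L) ℂ)ᴴ).trace‖ ^ 2 : ℝ) : ℂ) ∂μ
        = ((∫ V : Matrix.unitaryGroup (Fin L) ℂ,
            ‖(Am * (V : Matrix (Fin L) (Fin L) ℂ) * Bm
              * (V : Matrix (Fin L) (Fin L) ℂ)ᴴ).trace‖ ^ 2 ∂μ : ℝ) : ℂ) := integral_ofReal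
    rw [← hJ0, hAmd, hBmd, Ysum3 μ B A, ← hAmd, ← hBmd, hsum3]
  -- solve the linear system
  have hLne : (L:ℂ) ≠ 0 := Nat.cast_ne_zero.mpr (by omega)
  have hL2C : (L:ℂ)^2 - 1 ≠ 0 := by
    intro h
    have h' : ((L^2 : ℕ) : ℂ) = ((1 : ℕ) : ℂ) := by push_cast; linear_combination h
    have : L^2 = 1 := Nat.cast_injective h'
    nlinarith [this, hL]
  have h3 : x + (L:ℂ) * y = 1 := by
    apply mul_left_cancel₀ hLne
    linear_combination e2
  have h4 : x = (Bm.trace * conj Bm.trace - 1) / ((L:ℂ)^2 - 1) := by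
    rw [eq_div_iff hL2C]
    linear_combination e1 - h3
  -- convert norms
  have hre1 : Am.trace * conj Am.trace = ((‖Am.trace‖^2 : ℝ) : ℂ) := by
    rw [Complex.mul_conj]
    norm_cast
    rw [← Complex.sq_norm]
  have hre2 : Bm.trace * conj Bm.trace = ((‖Bm.trace‖^2 : ℝ) : ℂ) := by
    rw [Complex.mul_conj]
    norm_cast
    rw [← Complex.sq_norm]
  have hL2R : (L:ℝ)^2 - 1 ≠ 0 := by
    intro h
    have h' : ((L^2 : ℕ) : ℝ) = ((1 : ℕ) : ℝ) := by push_cast; linear_combination h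
    have : L^2 = 1 := Nat.cast_injective h'
    nlinarith [this, hL]
  apply Complex.ofReal_injective
  rw [hJ]
  have hfin : (Am.trace * conj Am.trace) * x + (L:ℂ) * y
      = (Am.trace * conj Am.trace - 1) * (Bm.trace * conj Bm.trace - 1) / ((L:ℂ)^2 - 1) + 1 := by
    rw [div_add' _ _ _ hL2C, eq_div_iff hL2C]
    have hLy : (L:ℂ) * y = 1 - x := by linear_combination h3
    rw [hLy, h4]
    field_simp
    ring
  rw [hfin, hre1, hre2]
  push_cast
  ring
end

section
/- Let $d \ge 1$, $M \ge 1$, $r \ge 1$ be integers, let $H_1, \dots, H_M$ be Hermitian $d \times d$ complex matrices, let $H = \sum_{I=1}^{M} H_I$, and let $t \in \mathbb{R}$. Then $\bigl\| e^{-iHt} - \bigl( e^{-iH_1 t/r} e^{-iH_2 t/r} \cdots e^{-iH_M t/r} \bigr)^{r} \bigr\|_{\mathrm{op}} \le \frac{t^2}{2r} \sum_{1 \le I < I' \le M} \bigl\| [H_I, H_{I'}] \bigr\|_{\mathrm{op}}$, where $[A,B] = AB - BA$ and $\|\cdot\|_{\mathrm{op}}$ is the operator norm induced by the Euclidean norm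 on $\mathbb{C}^d$. -/
open Matrix
open scoped Matrix.Norms.L2Operator

open NormedSpace (exp)

variable {d : ℕ}

local notation "Mat" => Matrix (Fin d) (Fin d) ℂ

section

noncomputable local instance : NormedAlgebra ℚ Mat := NormedAlgebra.restrictScalars ℚ ℂ Mat

lemma exp_mem_unitary {H : Mat} (hH : H.IsHermitian) (c : ℂ) (hc : star c = -c) :
    exp (c • H) ∈ unitary Mat := by
  apply NormedSpace.exp_mem_unitary_of_mem_skewAdjoint
  rw [skewAdjoint.mem_iff, star_smul, star_eq_conjTranspose, hH.eq, hc, neg_smul]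

lemma hasDerivAt_exp_aux (c : ℂ) (X : Mat) (s : ℝ) :
    HasDerivAt (fun s : ℝ => exp (((s : ℂ) * c) • X))
      (c • (exp (((s : ℂ) * c) • X) * X)) s := by
  have h1 : HasDerivAt (fun u : ℂ => exp (u • X)) (exp (((s : ℂ) * c) • X) * X)
      ((s : ℂ) * c) := hasDerivAt_exp_smul_const X _
  have h2 : HasDerivAt (fun s : ℝ => (s : ℂ) * c) c s := by
    simpa using (Complex.ofRealCLM.hasDerivAt (x := s)).mul_const c
  exact h1.scomp s h2

lemma exp_comm_self (c : ℂ) (X : Mat) : exp (c • X) * X = X * exp (c • X) :=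
  (((Commute.refl X).smul_left c).exp_left).eq

lemma exp_neg_mul_exp (c : ℂ) (X : Mat) : exp (-c • X) * exp (c • X) = 1 := by
  rw [← NormedSpace.exp_add_of_commute (((Commute.refl X).smul_left _).smul_right _)]
  simp [← add_smul]

lemma star_coeff (s : ℝ) : star ((s : ℂ) * (-Complex.I)) = -((s : ℂ) * (-Complex.I)) := by
  simp [Complex.ext_iff]

lemma comm_exp_bound (A : Mat) {B : Mat} (hB : B.IsHermitian) (s : ℝ) :
    ‖A * exp (((s : ℂ) * (-Complex.I)) • B) - exp (((s : ℂ) * (-Complex.I)) • B) * A‖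
      ≤ |s| * ‖A * B - B * A‖ := by
  set g : ℝ → Mat := fun u =>
    exp (((u : ℂ) * Complex.I) • B) * A * exp (((u : ℂ) * (-Complex.I)) • B) with hg_def
  have hmemP : ∀ u : ℝ, exp (((u : ℂ) * Complex.I) • B) ∈ unitary Mat := by
    intro u
    apply exp_mem_unitary hB
    simp [Complex.ext_iff]
  have hmemM : ∀ u : ℝ, exp (((u : ℂ) * (-Complex.I)) • B) ∈ unitary Mat := fun u =>
    exp_mem_unitary hB _ (star_coeff u)
  have hg : ∀ u : ℝ, HasDerivAt g
      (Complex.I • (exp (((u : ℂ) * Complex.I) • B) * ((B * A - A * B) *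
        exp (((u : ℂ) * (-Complex.I)) • B)))) u := by
    intro u
    have h1 := (hasDerivAt_exp_aux Complex.I B u).mul_const A
    have h2 := hasDerivAt_exp_aux (-Complex.I) B u
    have h3 := h1.mul h2
    refine h3.congr_deriv (Eq.symm ?_)
    have hc1 := exp_comm_self (((u : ℂ) * Complex.I)) B
    have hc2 : exp (-(((u : ℂ) * Complex.I) • B)) * B
        = B * exp (-(((u : ℂ) * Complex.I) • B)) :=
      ((((Commute.refl B).smul_left ((u : ℂ) * Complex.I)).neg_left).exp_left).eq
    simp only [neg_smul, mul_neg, mul_smul_comm, smul_mul_assoc]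
    rw [← sub_eq_add_neg, ← smul_sub]
    congr 1
    rw [hc2]
    noncomm_ring
  have hbound : ∀ u : ℝ, ‖Complex.I • (exp (((u : ℂ) * Complex.I) • B) * ((B * A - A * B) *
      exp (((u : ℂ) * (-Complex.I)) • B)))‖ = ‖A * B - B * A‖ := by
    intro u
    rw [norm_smul, Complex.norm_I, one_mul, CStarRing.norm_mem_unitary_mul _ (hmemP u),
      CStarRing.norm_mul_mem_unitary _ (hmemM u), norm_sub_rev]
  have key := convex_univ.norm_image_sub_le_of_norm_hasDerivWithin_le
    (f := g) (C := ‖A * B - B * A‖)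
    (fun u _ => (hg u).hasDerivWithinAt) (fun u _ => le_of_eq (hbound u))
    (Set.mem_univ 0) (Set.mem_univ s)
  have hg0 : g 0 = A := by simp [hg_def, NormedSpace.exp_zero]
  have hfac : A * exp (((s : ℂ) * (-Complex.I)) • B)
      - exp (((s : ℂ) * (-Complex.I)) • B) * A
      = exp (((s : ℂ) * (-Complex.I)) • B) * (g s - g 0) := by
    rw [hg0, hg_def, mul_sub]
    congr 1
    have := exp_neg_mul_exp (((s : ℂ) * Complex.I)) B
    have hne : (-((s:ℂ) * Complex.I)) = ((s:ℂ) * (-Complex.I)) := by ring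
    rw [hne] at this
    calc A * exp (((s : ℂ) * (-Complex.I)) • B)
        = (exp (((s : ℂ) * (-Complex.I)) • B) * exp (((s : ℂ) * Complex.I) • B)) * A *
            exp (((s : ℂ) * (-Complex.I)) • B) := by rw [this]; noncomm_ring
      _ = exp (((s : ℂ) * (-Complex.I)) • B) *
            (exp (((s : ℂ) * Complex.I) • B) * A * exp (((s : ℂ) * (-Complex.I)) • B)) := by
          noncomm_ring
  rw [hfac, CStarRing.norm_mem_unitary_mul _ (hmemM s)]
  calc ‖g s - g 0‖ ≤ ‖A * B - B * A‖ * ‖s - 0‖ := key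
    _ = |s| * ‖A * B - B * A‖ := by rw [sub_zero, Real.norm_eq_abs, mul_comm]

lemma exp_deriv_prod2 (A B : Mat) (s : ℝ) :
    HasDerivAt (fun u : ℝ => exp (((u : ℂ) * Complex.I) • (A + B)) *
        (exp (((u : ℂ) * (-Complex.I)) • A) * exp (((u : ℂ) * (-Complex.I)) • B)))
      (Complex.I • (exp (((s : ℂ) * Complex.I) • (A + B)) *
        ((B * exp (((s : ℂ) * (-Complex.I)) • A)
          - exp (((s : ℂ) * (-Complex.I)) • A) * B) *
          exp (((s : ℂ) * (-Complex.I)) • B)))) s := by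
  have h1 := hasDerivAt_exp_aux Complex.I (A + B) s
  have h2 := hasDerivAt_exp_aux (-Complex.I) A s
  have h3 := hasDerivAt_exp_aux (-Complex.I) B s
  have h4 := h1.mul (h2.mul h3)
  refine h4.congr_deriv (Eq.symm ?_)
  simp only [Pi.mul_apply]
  have hcA : exp (-(((s : ℂ) * Complex.I) • A)) * A
      = A * exp (-(((s : ℂ) * Complex.I) • A)) :=
    ((((Commute.refl A).smul_left ((s : ℂ) * Complex.I)).neg_left).exp_left).eq
  have hcB : exp (-(((s : ℂ) * Complex.I) • B)) * B
      = B * exp (-(((s : ℂ) * Complex.I) • B)) :=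
    ((((Commute.refl B).smul_left ((s : ℂ) * Complex.I)).neg_left).exp_left).eq
  simp only [neg_smul, mul_neg, neg_mul, mul_smul_comm, smul_mul_assoc]
  simp only [← neg_add, mul_neg, mul_add, mul_smul_comm]
  rw [← smul_add, ← sub_eq_add_neg, ← smul_sub]
  congr 1
  rw [hcA, hcB]
  noncomm_ring

lemma cont_exp_aux (c : ℂ) (X : Mat) :
    Continuous fun s : ℝ => exp (((s : ℂ) * c) • X) :=
  NormedSpace.exp_continuous.comp ((Complex.continuous_ofReal.mul continuous_const).smul
    continuous_const)

lemma star_coeff' (s : ℝ) : star ((s : ℂ) * Complex.I) = -((s : ℂ) * Complex.I) := by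
  simp [Complex.ext_iff]

lemma two_term {A B : Mat} (hA : A.IsHermitian) (hB : B.IsHermitian) (τ : ℝ) :
    ‖exp (((τ : ℂ) * (-Complex.I)) • (A + B))
        - exp (((τ : ℂ) * (-Complex.I)) • A) * exp (((τ : ℂ) * (-Complex.I)) • B)‖
      ≤ τ ^ 2 / 2 * ‖A * B - B * A‖ := by
  have hS : (A + B).IsHermitian := hA.add hB
  set E : ℝ → Mat := fun u => exp (((u : ℂ) * Complex.I) • (A + B)) *
      (exp (((u : ℂ) * (-Complex.I)) • A) * exp (((u : ℂ) * (-Complex.I)) • B)) with hE_def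
  set D : ℝ → Mat := fun u => Complex.I • (exp (((u : ℂ) * Complex.I) • (A + B)) *
      ((B * exp (((u : ℂ) * (-Complex.I)) • A)
        - exp (((u : ℂ) * (-Complex.I)) • A) * B) *
        exp (((u : ℂ) * (-Complex.I)) • B))) with hD_def
  have hE : ∀ u, HasDerivAt E (D u) u := fun u => exp_deriv_prod2 A B u
  have hcont : Continuous D := by
    rw [hD_def]
    apply Continuous.const_smul (c := Complex.I)
    exact (cont_exp_aux _ _).mul (((continuous_const.mul (cont_exp_aux _ _)).sub
      ((cont_exp_aux _ _).mul continuous_const)).mul (cont_exp_aux _ _))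
  have hftc : ∫ u in (0:ℝ)..τ, D u = E τ - E 0 :=
    intervalIntegral.integral_eq_sub_of_hasDerivAt (fun u _ => hE u)
      (hcont.intervalIntegrable 0 τ)
  have hE0 : E 0 = 1 := by
    simp [hE_def, NormedSpace.exp_zero]
  set C := ‖A * B - B * A‖ with hC
  have hCnn : 0 ≤ C := norm_nonneg _
  have hDb : ∀ u : ℝ, ‖D u‖ ≤ C * |u| := by
    intro u
    have hmemS : exp (((u : ℂ) * Complex.I) • (A + B)) ∈ unitary Mat :=
      exp_mem_unitary hS _ (star_coeff' u)
    have hmemB : exp (((u : ℂ) * (-Complex.I)) • B) ∈ unitary Mat :=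
      exp_mem_unitary hB _ (star_coeff u)
    rw [hD_def]
    simp only []
    rw [norm_smul, Complex.norm_I, one_mul, CStarRing.norm_mem_unitary_mul _ hmemS,
      CStarRing.norm_mul_mem_unitary _ hmemB]
    calc ‖B * exp (((u : ℂ) * (-Complex.I)) • A)
          - exp (((u : ℂ) * (-Complex.I)) • A) * B‖
        ≤ |u| * ‖B * A - A * B‖ := comm_exp_bound B hA u
      _ = C * |u| := by rw [norm_sub_rev, mul_comm, hC]
  have hfac : exp (((τ : ℂ) * (-Complex.I)) • (A + B))
      - exp (((τ : ℂ) * (-Complex.I)) • A) * exp (((τ : ℂ) * (-Complex.I)) • B)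
      = exp (((τ : ℂ) * (-Complex.I)) • (A + B)) * (E 0 - E τ) := by
    rw [hE0, mul_sub, mul_one]
    congr 1
    have hinv : exp (((τ : ℂ) * (-Complex.I)) • (A + B)) *
        exp (((τ : ℂ) * Complex.I) • (A + B)) = 1 := by
      have := exp_neg_mul_exp (((τ : ℂ) * Complex.I)) (A + B)
      rw [show -((τ : ℂ) * Complex.I) = (τ : ℂ) * (-Complex.I) by ring] at this
      exact this
    rw [hE_def]
    simp only []
    rw [← mul_assoc, hinv, one_mul]
  have hmemS : exp (((τ : ℂ) * (-Complex.I)) • (A + B)) ∈ unitary Mat :=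
    exp_mem_unitary hS _ (star_coeff τ)
  rw [hfac, CStarRing.norm_mem_unitary_mul _ hmemS, norm_sub_rev]
  have hnorm : ‖E τ - E 0‖ ≤ |∫ u in (0:ℝ)..τ, ‖D u‖| := by
    rw [← hftc]
    exact intervalIntegral.norm_integral_le_abs_integral_norm
  refine hnorm.trans ?_
  rcases le_total 0 τ with h | h
  · have h0 : 0 ≤ ∫ u in (0:ℝ)..τ, ‖D u‖ :=
      intervalIntegral.integral_nonneg h (fun u _ => norm_nonneg _)
    rw [abs_of_nonneg h0]
    have h1 : (∫ u in (0:ℝ)..τ, ‖D u‖) ≤ ∫ u in (0:ℝ)..τ, C * |u| :=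
      intervalIntegral.integral_mono_on h (hcont.norm.intervalIntegrable 0 τ)
        ((continuous_const.mul continuous_abs).intervalIntegrable 0 τ)
        (fun u _ => hDb u)
    have h2 : (∫ u in (0:ℝ)..τ, C * |u|) = C * (τ ^ 2 / 2) := by
      rw [intervalIntegral.integral_const_mul]
      rw [show (∫ u in (0:ℝ)..τ, |u|) = ∫ u in (0:ℝ)..τ, u from
        intervalIntegral.integral_congr (fun u hu => by
          rw [Set.uIcc_of_le h] at hu
          exact abs_of_nonneg hu.1)]
      rw [integral_id]
      ring
    calc (∫ u in (0:ℝ)..τ, ‖D u‖) ≤ C * (τ ^ 2 / 2) := h1.trans (le_of_eq h2)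
      _ = τ ^ 2 / 2 * C := by ring
  · have h0 : 0 ≤ ∫ u in τ..(0:ℝ), ‖D u‖ :=
      intervalIntegral.integral_nonneg h (fun u _ => norm_nonneg _)
    rw [intervalIntegral.integral_symm τ 0, abs_neg, abs_of_nonneg h0]
    have h1 : (∫ u in τ..(0:ℝ), ‖D u‖) ≤ ∫ u in τ..(0:ℝ), C * |u| :=
      intervalIntegral.integral_mono_on h (hcont.norm.intervalIntegrable τ 0)
        ((continuous_const.mul continuous_abs).intervalIntegrable τ 0)
        (fun u _ => hDb u)
    have h2 : (∫ u in τ..(0:ℝ), C * |u|) = C * (τ ^ 2 / 2) := by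
      rw [intervalIntegral.integral_const_mul]
      rw [show (∫ u in τ..(0:ℝ), |u|) = ∫ u in τ..(0:ℝ), -u from
        intervalIntegral.integral_congr (fun u hu => by
          rw [Set.uIcc_of_le h] at hu
          exact abs_of_nonpos hu.2)]
      rw [intervalIntegral.integral_neg, integral_id]
      ring
    calc (∫ u in τ..(0:ℝ), ‖D u‖) ≤ C * (τ ^ 2 / 2) := h1.trans (le_of_eq h2)
      _ = τ ^ 2 / 2 * C := by ring

noncomputable def pairC : List Mat → ℝ
  | [] => 0
  | A :: L => (L.map fun B => ‖A * B - B * A‖).sum + pairC L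

lemma pairC_nonneg : ∀ L : List Mat, 0 ≤ pairC L
  | [] => le_refl 0
  | A :: L => by
    have h1 : 0 ≤ (L.map fun B => ‖A * B - B * A‖).sum :=
      List.sum_nonneg (by
        intro x hx
        obtain ⟨B, _, rfl⟩ := List.mem_map.mp hx
        exact norm_nonneg _)
    have h2 := pairC_nonneg L
    simpa [pairC] using add_nonneg h1 h2

lemma list_sum_herm : ∀ (L : List Mat), (∀ A ∈ L, A.IsHermitian) → L.sum.IsHermitian
  | [], _ => by simpa using Matrix.isHermitian_zero
  | A :: L, h => by
    rw [List.sum_cons]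
    exact (h A (List.mem_cons_self)).add
      (list_sum_herm L fun B hB => h B (List.mem_cons_of_mem _ hB))

lemma comm_sum_bound (A : Mat) : ∀ L : List Mat,
    ‖A * L.sum - L.sum * A‖ ≤ (L.map fun B => ‖A * B - B * A‖).sum
  | [] => by simp
  | B :: L => by
    rw [List.sum_cons, List.map_cons, List.sum_cons]
    calc ‖A * (B + L.sum) - (B + L.sum) * A‖
        = ‖(A * B - B * A) + (A * L.sum - L.sum * A)‖ := by congr 1; noncomm_ring
      _ ≤ ‖A * B - B * A‖ + ‖A * L.sum - L.sum * A‖ := norm_add_le _ _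
      _ ≤ ‖A * B - B * A‖ + (L.map fun B => ‖A * B - B * A‖).sum := by
          have := comm_sum_bound A L
          linarith

lemma single_step : ∀ (L : List Mat), (∀ A ∈ L, A.IsHermitian) → ∀ τ : ℝ,
    ‖exp (((τ : ℂ) * (-Complex.I)) • L.sum)
        - (L.map fun A => exp (((τ : ℂ) * (-Complex.I)) • A)).prod‖
      ≤ τ ^ 2 / 2 * pairC L
  | [], _, τ => by simp [pairC, NormedSpace.exp_zero]
  | A :: L, h, τ => by
    have hA : A.IsHermitian := h A (List.mem_cons_self)
    have hL : ∀ B ∈ L, B.IsHermitian := fun B hB => h B (List.mem_cons_of_mem _ hB)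
    have hS : L.sum.IsHermitian := list_sum_herm L hL
    rw [List.sum_cons, List.map_cons, List.prod_cons]
    have tri : ‖exp (((τ : ℂ) * (-Complex.I)) • (A + L.sum))
          - exp (((τ : ℂ) * (-Complex.I)) • A) *
            (L.map fun A => exp (((τ : ℂ) * (-Complex.I)) • A)).prod‖
        ≤ ‖exp (((τ : ℂ) * (-Complex.I)) • (A + L.sum))
            - exp (((τ : ℂ) * (-Complex.I)) • A) * exp (((τ : ℂ) * (-Complex.I)) • L.sum)‖
          + ‖exp (((τ : ℂ) * (-Complex.I)) • A) * exp (((τ : ℂ) * (-Complex.I)) • L.sum)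
            - exp (((τ : ℂ) * (-Complex.I)) • A) *
              (L.map fun A => exp (((τ : ℂ) * (-Complex.I)) • A)).prod‖ := by
      rw [← dist_eq_norm, ← dist_eq_norm, ← dist_eq_norm]
      exact dist_triangle _ _ _
    have h1 : ‖exp (((τ : ℂ) * (-Complex.I)) • (A + L.sum))
          - exp (((τ : ℂ) * (-Complex.I)) • A) * exp (((τ : ℂ) * (-Complex.I)) • L.sum)‖
        ≤ τ ^ 2 / 2 * (L.map fun B => ‖A * B - B * A‖).sum := by
      refine (two_term hA hS τ).trans ?_
      have := comm_sum_bound A L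
      nlinarith [sq_nonneg τ]
    have h2 : ‖exp (((τ : ℂ) * (-Complex.I)) • A) * exp (((τ : ℂ) * (-Complex.I)) • L.sum)
          - exp (((τ : ℂ) * (-Complex.I)) • A) *
            (L.map fun A => exp (((τ : ℂ) * (-Complex.I)) • A)).prod‖
        ≤ τ ^ 2 / 2 * pairC L := by
      rw [← mul_sub, CStarRing.norm_mem_unitary_mul _ (exp_mem_unitary hA _ (star_coeff τ))]
      exact single_step L hL τ
    calc _ ≤ _ := tri
      _ ≤ τ ^ 2 / 2 * (L.map fun B => ‖A * B - B * A‖).sum + τ ^ 2 / 2 * pairC L := by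
          linarith
      _ = τ ^ 2 / 2 * pairC (A :: L) := by rw [pairC]; ring

lemma norm_pow_le_one {U : Mat} (h1 : ‖(1 : Mat)‖ ≤ 1) (hU : ‖U‖ ≤ 1) :
    ∀ n : ℕ, ‖U ^ n‖ ≤ 1
  | 0 => by simpa using h1
  | n + 1 => by
    rw [pow_succ]
    calc ‖U ^ n * U‖ ≤ ‖U ^ n‖ * ‖U‖ := norm_mul_le _ _
      _ ≤ 1 := by nlinarith [norm_nonneg (U ^ n), norm_nonneg U, norm_pow_le_one h1 hU n]

lemma norm_pow_sub_pow {U V : Mat} (h1 : ‖(1 : Mat)‖ ≤ 1) (hU : ‖U‖ ≤ 1) (hV : ‖V‖ ≤ 1) :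
    ∀ n : ℕ, ‖U ^ n - V ^ n‖ ≤ n * ‖U - V‖
  | 0 => by simp
  | n + 1 => by
    have key : U ^ (n + 1) - V ^ (n + 1) = U ^ n * (U - V) + (U ^ n - V ^ n) * V := by
      rw [pow_succ, pow_succ]; noncomm_ring
    rw [key]
    calc ‖U ^ n * (U - V) + (U ^ n - V ^ n) * V‖
        ≤ ‖U ^ n * (U - V)‖ + ‖(U ^ n - V ^ n) * V‖ := norm_add_le _ _
      _ ≤ ‖U ^ n‖ * ‖U - V‖ + ‖U ^ n - V ^ n‖ * ‖V‖ :=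
          add_le_add (norm_mul_le _ _) (norm_mul_le _ _)
      _ ≤ (n + 1 : ℕ) * ‖U - V‖ := by
          have a1 := norm_pow_le_one h1 hU n
          have a2 := norm_pow_sub_pow h1 hU hV n
          have a3 := norm_nonneg (U - V)
          have a4 := norm_nonneg (U ^ n - V ^ n)
          have a5 := norm_nonneg V
          push_cast
          nlinarith

lemma pairC_eq : ∀ (M : ℕ) (H : Fin M → Mat),
    pairC ((List.finRange M).map H)
      = ∑ I : Fin M, ∑ J : Fin M, if I < J then ‖H I * H J - H J * H I‖ else 0
  | 0, H => by simp [pairC]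
  | M + 1, H => by
    rw [List.finRange_succ, List.map_cons, List.map_map, pairC]
    rw [pairC_eq M (H ∘ Fin.succ)]
    rw [Fin.sum_univ_succ]
    congr 1
    · rw [Fin.sum_univ_succ]
      simp only [lt_self_iff_false, if_false, Fin.succ_pos, if_true, zero_add]
      rw [Fin.sum_univ_def, List.map_map]
      rfl
    · refine Finset.sum_congr rfl fun i _ => ?_
      rw [Fin.sum_univ_succ]
      simp [Fin.succ_lt_succ_iff, Function.comp]

end

/-- First-order Trotter–Suzuki error bound: for Hermitian `H₁, …, H_M` with
`H = ∑ H_I` and any `t ∈ ℝ`, `r ≥ 1`,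
`‖e^{-iHt} - (e^{-iH₁t/r} ⋯ e^{-iH_M t/r})^r‖ ≤ (t²/2r) ∑_{I<I'} ‖[H_I, H_{I'}]‖`,
in the operator norm induced by the Euclidean norm on `ℂ^d`
(the `Matrix.L2OpNorm` locale). -/
theorem trotter_suzuki_error_bound (d M r : ℕ) (hd : 1 ≤ d) (hM : 1 ≤ M) (hr : 1 ≤ r)
    (H : Fin M → Matrix (Fin d) (Fin d) ℂ) (hH : ∀ I, (H I).IsHermitian) (t : ℝ) :
    ‖NormedSpace.exp ((-(t : ℂ) * Complex.I) • ∑ I, H I)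
        - (((List.finRange M).map fun I =>
            NormedSpace.exp (((-(t : ℂ) * Complex.I) / (r : ℂ)) • H I)).prod) ^ r‖
      ≤ t ^ 2 / (2 * (r : ℝ)) *
          ∑ p ∈ Finset.univ.filter (fun p : Fin M × Fin M => p.1 < p.2),
            ‖H p.1 * H p.2 - H p.2 * H p.1‖ := by
  letI : NormedAlgebra ℚ (Matrix (Fin d) (Fin d) ℂ) := NormedAlgebra.restrictScalars ℚ ℂ _
  have hne : (1 : Matrix (Fin d) (Fin d) ℂ) ≠ 0 := by
    intro h
    have h2 := congrFun (congrFun h ⟨0, hd⟩) ⟨0, hd⟩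
    rw [Matrix.one_apply_eq] at h2
    simp at h2
  haveI : Nontrivial (Matrix (Fin d) (Fin d) ℂ) := ⟨⟨1, 0, hne⟩⟩
  have hr0 : (0 : ℝ) < (r : ℝ) := by exact_mod_cast hr
  have hrR : (r : ℝ) ≠ 0 := ne_of_gt hr0
  have hrC : (r : ℂ) ≠ 0 := by exact_mod_cast hrR
  set τ : ℝ := t / r with hτ
  have hco : (-(t : ℂ) * Complex.I) / (r : ℂ) = ((τ : ℝ) : ℂ) * (-Complex.I) := by
    rw [hτ]
    push_cast
    field_simp
  set L : List (Matrix (Fin d) (Fin d) ℂ) := (List.finRange M).map H with hL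
  have hLh : ∀ A ∈ L, A.IsHermitian := by
    intro A hAmem
    obtain ⟨I, _, rfl⟩ := List.mem_map.mp hAmem
    exact hH I
  have hsum : ∑ I, H I = L.sum := Fin.sum_univ_def H
  set U := exp (((τ : ℂ) * (-Complex.I)) • L.sum) with hU_def
  set V := (L.map fun A => exp (((τ : ℂ) * (-Complex.I)) • A)).prod with hV_def
  have e1 : exp ((-(t : ℂ) * Complex.I) • ∑ I, H I) = U ^ r := by
    rw [hsum, hU_def, ← NormedSpace.exp_nsmul]
    congr 1
    rw [← Nat.cast_smul_eq_nsmul ℂ, smul_smul]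
    congr 1
    rw [hτ]
    push_cast
    field_simp
  have e2 : ((List.finRange M).map fun I =>
      exp (((-(t : ℂ) * Complex.I) / (r : ℂ)) • H I)).prod = V := by
    rw [hV_def, hL, List.map_map]
    refine congrArg List.prod (List.map_congr_left fun I _ => ?_)
    simp only [Function.comp_apply]
    rw [hco]
  rw [e1, e2]
  have hUu : U ∈ unitary (Matrix (Fin d) (Fin d) ℂ) :=
    exp_mem_unitary (list_sum_herm L hLh) _ (star_coeff τ)
  have hVu : V ∈ unitary (Matrix (Fin d) (Fin d) ℂ) := by
    rw [hV_def]
    apply Submonoid.list_prod_mem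
    intro x hx
    obtain ⟨A, hAmem, rfl⟩ := List.mem_map.mp hx
    exact exp_mem_unitary (hLh A hAmem) _ (star_coeff τ)
  have h1 : ‖(1 : Matrix (Fin d) (Fin d) ℂ)‖ ≤ 1 := le_of_eq CStarRing.norm_one
  have hUn : ‖U‖ ≤ 1 := le_of_eq (CStarRing.norm_of_mem_unitary hUu)
  have hVn : ‖V‖ ≤ 1 := le_of_eq (CStarRing.norm_of_mem_unitary hVu)
  have step1 : ‖U ^ r - V ^ r‖ ≤ r * ‖U - V‖ := norm_pow_sub_pow h1 hUn hVn r
  have step2 : ‖U - V‖ ≤ τ ^ 2 / 2 * pairC L := single_step L hLh τ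
  have hpc : pairC L = ∑ p ∈ Finset.univ.filter (fun p : Fin M × Fin M => p.1 < p.2),
      ‖H p.1 * H p.2 - H p.2 * H p.1‖ := by
    rw [hL, pairC_eq M H, Finset.sum_filter, Fintype.sum_prod_type]
  have hpcn : 0 ≤ pairC L := pairC_nonneg L
  calc ‖U ^ r - V ^ r‖ ≤ r * ‖U - V‖ := step1
    _ ≤ r * (τ ^ 2 / 2 * pairC L) := by nlinarith
    _ = t ^ 2 / (2 * (r : ℝ)) * pairC L := by
        rw [hτ]
        field_simp
    _ = _ := by rw [hpc]
end
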